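/- For a probability vector λ1 ≥ λ2 ≥ ... ≥ λd ≥ 0 with ∑ λi = 1 and fixed purity ∑ λi² = γ ∈ [1/d, 1], the Shannon entropy -∑ λi log λi attains its maximum at the spectrum λ1 = 1/d + √((d-1)/d · (γ - 1/d)) and λ2 = ... = λd = (1 - λ1)/(d-1). -/

import Mathlib

/-!
Let `v = (1 - l1) / (d - 1)` be the common value of the small eigenvalues of the extremal
spectrum and `s = l1 / v`. In terms of `klFun t = t log t + 1 - t`, the claim amounts to
`klFun s ≤ ∑ i, klFun (λᵢ / v)`. The sum and purity constraints say exactly that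
`∑ i, (λᵢ / v - 1) ^ 2 = (s - 1) ^ 2`, and Samuelson's inequality gives `λᵢ ≤ l1`, i.e.
`λᵢ / v ≤ s`. Since `klFun t / (t - 1) ^ 2` is at least `1 / 2` for `t ≤ 1`, at most `1 / 2`
for `t ≥ 1` and decreasing on `(1, ∞)`, every `t ∈ [0, s]` satisfies
`klFun t ≥ c (t - 1) ^ 2` with `c = klFun s / (s - 1) ^ 2`; summing over `t = λᵢ / v` gives
the claim. When `v = 0`, i.e. `γ = 1`, the spectrum is a point mass.
-/

open Real Set Finset InformationTheory

namespace Real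

theorem two_mul_sub_one_le_add_one_mul_log {t : ℝ} (ht : 1 ≤ t) :
    2 * (t - 1) ≤ (t + 1) * log t := by
  have hx : (t - 1) / (t + 1) < 1 := by rw [div_lt_one (by linarith)]; linarith
  have h := sum_range_le_log_div (div_nonneg (by linarith) (by linarith)) hx 1
  have ht' : (1 + (t - 1) / (t + 1)) / (1 - (t - 1) / (t + 1)) = t := by
    field_simp
    ring
  rw [ht', Finset.sum_range_one] at h
  have := (div_le_iff₀ (by linarith : (0:ℝ) < t + 1)).mp (by simpa using h)
  linarith

end Real

namespace InformationTheory

theorem antitoneOn_klFun_sub_sq : AntitoneOn (fun t ↦ klFun t - (t - 1) ^ 2 / 2) (Ici 0) := by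
  have hderiv : ∀ t : ℝ, t ≠ 0 →
      HasDerivAt (fun t ↦ klFun t - (t - 1) ^ 2 / 2) (log t - (t - 1)) t := fun t ht ↦
    ((hasDerivAt_klFun ht).sub ((((hasDerivAt_id t).sub_const 1).pow 2).div_const 2)).congr_deriv
      (by simp)
  refine antitoneOn_of_hasDerivWithinAt_nonpos (f' := fun t ↦ log t - (t - 1)) (convex_Ici 0)
    (by unfold klFun; fun_prop) (fun t ht ↦ ?_) (fun t ht ↦ ?_)
  all_goals rw [interior_Ici] at ht
  · exact (hderiv t (ne_of_gt ht)).hasDerivWithinAt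
  · linarith [log_le_sub_one_of_pos (show 0 < t from ht)]

theorem antitoneOn_klFun_div_sq : AntitoneOn (fun t ↦ klFun t / (t - 1) ^ 2) (Ioi 1) := by
  have hderiv : ∀ t : ℝ, 1 < t → HasDerivAt (fun t ↦ klFun t / (t - 1) ^ 2)
      ((t - 1) * (2 * (t - 1) - (t + 1) * log t) / ((t - 1) ^ 2) ^ 2) t := fun t ht ↦
    ((hasDerivAt_klFun (by positivity)).div (((hasDerivAt_id t).sub_const 1).pow 2)
      (pow_ne_zero 2 (sub_ne_zero.mpr ht.ne'))).congr_deriv (by simp [klFun]; ring)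
  refine antitoneOn_of_hasDerivWithinAt_nonpos
    (f' := fun t ↦ (t - 1) * (2 * (t - 1) - (t + 1) * log t) / ((t - 1) ^ 2) ^ 2) (convex_Ioi 1)
    (fun t ht ↦ (hderiv t ht).continuousAt.continuousWithinAt) (fun t ht ↦ ?_) (fun t ht ↦ ?_)
  all_goals rw [interior_Ioi] at ht
  · exact (hderiv t ht).hasDerivWithinAt
  · have ht' : 1 < t := ht
    exact div_nonpos_of_nonpos_of_nonneg (mul_nonpos_of_nonneg_of_nonpos (by linarith)
      (by linarith [two_mul_sub_one_le_add_one_mul_log ht'.le])) (by positivity)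

theorem klFun_div_sq_mul_sq_le {s t : ℝ} (hs : 1 ≤ s) (ht : 0 ≤ t) (hts : t ≤ s) :
    klFun s / (s - 1) ^ 2 * (t - 1) ^ 2 ≤ klFun t := by
  rcases le_or_gt t 1 with ht1 | ht1
  · have h1 : (1 : ℝ) ∈ Set.Ici 0 := mem_Ici.2 zero_le_one
    have hs' := antitoneOn_klFun_sub_sq h1 (mem_Ici.2 (zero_le_one.trans hs)) hs
    have ht' := antitoneOn_klFun_sub_sq ht h1 ht1
    simp only [klFun_one, sub_self] at hs' ht'
    have hc : klFun s / (s - 1) ^ 2 ≤ 1 / 2 :=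
      div_le_of_le_mul₀ (sq_nonneg _) (by norm_num) (by norm_num at hs'; linarith)
    nlinarith [sq_nonneg (t - 1)]
  · have h := antitoneOn_klFun_div_sq ht1 (ht1.trans_le hts) hts
    exact (le_div_iff₀ (by nlinarith)).mp h

theorem klFun_le_sum_klFun {ι : Type*} [Fintype ι] {s : ℝ} {t : ι → ℝ} (hs : 1 ≤ s)
    (ht0 : ∀ i, 0 ≤ t i) (hts : ∀ i, t i ≤ s) (h : ∑ i, (t i - 1) ^ 2 = (s - 1) ^ 2) :
    klFun s ≤ ∑ i, klFun (t i) :=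
  calc klFun s = klFun s / (s - 1) ^ 2 * (s - 1) ^ 2 :=
        (div_mul_cancel_of_imp fun h ↦ by simp [show s = 1 by nlinarith, klFun_one]).symm
    _ = ∑ i, klFun s / (s - 1) ^ 2 * (t i - 1) ^ 2 := by rw [← h, mul_sum]
    _ ≤ ∑ i, klFun (t i) := sum_le_sum fun i _ ↦ klFun_div_sq_mul_sq_le hs (ht0 i) (hts i)

theorem mul_klFun_div (x : ℝ) {v : ℝ} (hv : v ≠ 0) :
    v * klFun (x / v) = -negMulLog x - x * log v + v - x := by
  rcases eq_or_ne x 0 with rfl | hx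
  · simp [klFun_zero]
  · rw [klFun_apply, log_div hx hv, negMulLog]
    field_simp

end InformationTheory

section FiniteSum

variable {ι : Type*} [Fintype ι]

/-- Samuelson's inequality. -/
theorem sq_sub_mean_le (p : ι → ℝ) (i : ι) :
    (p i - (∑ j, p j) / Fintype.card ι) ^ 2 ≤
      (Fintype.card ι - 1) / Fintype.card ι *
        (∑ j, p j ^ 2 - (∑ j, p j) ^ 2 / Fintype.card ι) := by
  classical
  have : Nonempty ι := ⟨i⟩
  have hn : (0 : ℝ) < Fintype.card ι := by exact_mod_cast Fintype.card_pos
  have hcs := sq_sum_le_card_mul_sum_sq (s := Finset.univ.erase i) (f := p)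
  rw [card_erase_of_mem (mem_univ i), card_univ, Nat.cast_sub Fintype.card_pos,
    Nat.cast_one] at hcs
  rw [← add_sum_erase _ _ (mem_univ i), ← add_sum_erase _ (fun j ↦ p j ^ 2) (mem_univ i)]
  field_simp
  nlinarith

variable {p : ι → ℝ} {u v : ℝ}

theorem sum_negMulLog_eq_of_sum_sq_eq_sq (hp0 : ∀ i, 0 ≤ p i) (hpu : ∀ i, p i ≤ u)
    (hsum : ∑ i, p i = u) (hsq : ∑ i, p i ^ 2 = u ^ 2) :
    ∑ i, negMulLog (p i) = negMulLog u := by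
  have hzero : ∑ i, p i * (u - p i) = 0 := by
    simp only [mul_sub, sum_sub_distrib, ← sum_mul, hsum, ← sq, hsq, sub_self]
  have hp : ∀ i, p i = 0 ∨ p i = u := fun i ↦ by
    have := (sum_eq_zero_iff_of_nonneg fun j _ ↦ mul_nonneg (hp0 j) (sub_nonneg.2 (hpu j))).1
      hzero i (mem_univ i)
    rcases mul_eq_zero.1 this with h | h
    exacts [.inl h, .inr (sub_eq_zero.1 h).symm]
  have hterm : ∀ i, negMulLog (p i) = -log u * p i := fun i ↦ by
    rcases hp i with h | h <;> simp [h, negMulLog, mul_comm]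
  rw [sum_congr rfl fun i _ ↦ hterm i, ← mul_sum, hsum, negMulLog]
  ring

theorem sum_negMulLog_le_of_sum_sq_eq (hv : 0 ≤ v) (hvu : v ≤ u) (hp0 : ∀ i, 0 ≤ p i)
    (hpu : ∀ i, p i ≤ u) (hsum : ∑ i, p i = u + (Fintype.card ι - 1) * v)
    (hsq : ∑ i, p i ^ 2 = u ^ 2 + (Fintype.card ι - 1) * v ^ 2) :
    ∑ i, negMulLog (p i) ≤ negMulLog u + (Fintype.card ι - 1) * negMulLog v := by
  rcases hv.eq_or_lt with rfl | hv
  · simp only [mul_zero, add_zero, ne_eq, OfNat.ofNat_ne_zero, not_false_eq_true, zero_pow,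
      negMulLog_zero] at hsum hsq ⊢
    exact (sum_negMulLog_eq_of_sum_sq_eq_sq hp0 hpu hsum hsq).le
  have hnorm : ∑ i, (p i / v - 1) ^ 2 = (u / v - 1) ^ 2 := by
    have h : ∀ i, (p i / v - 1) ^ 2 = (p i ^ 2 - 2 * v * p i + v ^ 2) / v ^ 2 := fun i ↦ by
      field_simp
      ring
    simp only [h, ← sum_div, sum_add_distrib, sum_sub_distrib, ← mul_sum, hsum, hsq, sum_const,
      card_univ, nsmul_eq_mul]
    field_simp
    ring
  have hkl := klFun_le_sum_klFun (t := fun i ↦ p i / v) ((one_le_div hv).2 hvu)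
    (fun i ↦ div_nonneg (hp0 i) hv.le) (fun i ↦ div_le_div_of_nonneg_right (hpu i) hv.le) hnorm
  have hscaled := mul_le_mul_of_nonneg_left hkl hv.le
  simp only [mul_sum, mul_klFun_div _ hv.ne', sum_add_distrib, sum_sub_distrib, sum_neg_distrib,
    ← sum_mul, hsum, sum_const, card_univ, nsmul_eq_mul] at hscaled
  have hnv : negMulLog v = -(v * log v) := by simp [negMulLog]
  linear_combination hscaled - (Fintype.card ι - 1 : ℝ) * hnv

end FiniteSum

theorem mul_logb_eq_neg_negMulLog_div (b x : ℝ) : x * logb b x = -negMulLog x / log b := by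
  rw [negMulLog, logb]
  ring

theorem sqrt_mul_sub_inv_le_one_sub_inv {n γ : ℝ} (hn : 1 < n) (hγ : γ ≤ 1) :
    √((n - 1) / n * (γ - 1 / n)) ≤ 1 - 1 / n := by
  have hn' : (n - 1) / n = 1 - 1 / n := by field_simp
  rw [sqrt_le_left (by rw [← hn']; exact div_nonneg (by linarith) (by linarith)), ← hn', sq]
  exact mul_le_mul_of_nonneg_left (by linarith) (div_nonneg (by linarith) (by linarith))

theorem sq_add_sub_one_mul_sq_eq {n γ r : ℝ} (hn : 1 < n)
    (hr : r ^ 2 = (n - 1) / n * (γ - 1 / n)) :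
    (1 / n + r) ^ 2 + (n - 1) * ((1 - (1 / n + r)) / (n - 1)) ^ 2 = γ := by
  have hn1 : n - 1 ≠ 0 := by linarith
  have hn0 : n ≠ 0 := by linarith
  field_simp
  field_simp at hr
  linear_combination n * hr

theorem stmt1 (d : ℕ) (hd : 2 ≤ d) (γ : ℝ) (hγ1 : 1/(d:ℝ) ≤ γ) (hγ2 : γ ≤ 1)
    (lam : Fin d → ℝ)
    (hpos : ∀ i, 0 ≤ lam i) (hsum : ∑ i, lam i = 1) (hpur : ∑ i, lam i ^ 2 = γ) :
    let l1 : ℝ := 1/(d:ℝ) + Real.sqrt (((d:ℝ)-1)/(d:ℝ) * (γ - 1/(d:ℝ)))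
    (-∑ i, lam i * Real.logb 2 (lam i)) ≤
      -(l1 * Real.logb 2 l1) -
        ((d:ℝ)-1) * ((1 - l1)/((d:ℝ)-1) * Real.logb 2 ((1 - l1)/((d:ℝ)-1))) := by
  intro l1
  have hD : (1 : ℝ) < d := by exact_mod_cast hd
  have hD1 : (d : ℝ) - 1 ≠ 0 := by linarith
  set r := √(((d:ℝ) - 1) / d * (γ - 1 / d))
  have hl1 : l1 = 1 / d + r := rfl
  have hr0 : 0 ≤ r := sqrt_nonneg _
  have hr1 : r ≤ 1 - 1 / d := sqrt_mul_sub_inv_le_one_sub_inv hD hγ2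
  have hr2 : r ^ 2 = ((d:ℝ) - 1) / d * (γ - 1 / d) :=
    sq_sqrt (mul_nonneg (div_nonneg (by linarith) (by positivity)) (by linarith))
  have hbound : ∀ i, lam i ≤ l1 := fun i ↦ by
    have h := sq_sub_mean_le lam i
    rw [hsum, hpur, Fintype.card_fin, one_pow] at h
    linarith [le_sqrt_of_sq_le h]
  have hl1d : l1 * d = 1 + r * d := by rw [hl1]; field_simp
  have key := sum_negMulLog_le_of_sum_sq_eq (u := l1) (v := (1 - l1) / (d - 1))
    (div_nonneg (by linarith) (by linarith))
    ((div_le_iff₀ (by linarith)).2 (by nlinarith))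
    hpos hbound (by rw [hsum, Fintype.card_fin]; field_simp; ring)
    (by rw [hpur, Fintype.card_fin]; exact (sq_add_sub_one_mul_sq_eq hD hr2).symm)
  rw [Fintype.card_fin] at key
  have hkey := div_le_div_of_nonneg_right key (log_pos one_lt_two).le
  rw [add_div, mul_div_assoc] at hkey
  simp only [mul_logb_eq_neg_negMulLog_div, neg_div, sum_neg_distrib, neg_neg, ← sum_div]
  linarith
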